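/- Let (C₁,∂₁,B₁) and (C₂,∂₂,B₂) be finitely generated free chain complexes over R = F₂[U,V,U⁻¹,V⁻¹] with chosen bases, and let F : C₁ → C₂ be an R-equivariant chain map. Then Φ_{B₂} ∘ F + F ∘ Φ_{B₁} = ∂₂ ∘ F' + F' ∘ ∂₁, where F' is the R-linear map whose matrix (with respect to B₁, B₂) is the formal U-derivative of the matrix of F. In particular, F commutes with the formal derivative maps Φ up to R-equivariant chain homotopy. -/

import Mathlib

open Finsupp

noncomputable section

abbrev F2 : Type := ZMod 2

/-- The Laurent polynomial ring `F₂[U,V,U⁻¹,V⁻¹]`, realized as the monoid algebra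
of `ℤ × ℤ` over `F₂`; `U` corresponds to `(1,0)` and `V` to `(0,1)`. -/
abbrev R2 : Type := AddMonoidAlgebra F2 (ℤ × ℤ)

/-- Formal derivative of a Laurent polynomial with respect to `U`. -/
def dU (f : R2) : R2 :=
  Finsupp.sum f.coeff fun mn c => AddMonoidAlgebra.single (mn.1 - 1, mn.2) ((mn.1 : F2) * c)

/-- Formal derivative of a Laurent polynomial with respect to `V`. -/
def dV (f : R2) : R2 :=
  Finsupp.sum f.coeff fun mn c => AddMonoidAlgebra.single (mn.1, mn.2 - 1) ((mn.2 : F2) * c)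

/-- The `R2`-linear map `(B →₀ R2) →ₗ (B' →₀ R2)` determined by its values on
the standard basis. -/
def bmap {B B' : Type} (v : B → (B' →₀ R2)) : (B →₀ R2) →ₗ[R2] (B' →₀ R2) :=
  Finsupp.lsum R2 fun x => LinearMap.toSpanSingleton R2 _ (v x)

/-- The matrix entry `P_{x y}` of a linear map with respect to the standard bases. -/
def matOf {B B' : Type} (f : (B →₀ R2) →ₗ[R2] (B' →₀ R2)) (x : B) (y : B') : R2 :=
  f (Finsupp.single x 1) y

/-- Apply `g : R2 → R2` to each matrix entry of `f`. -/
def entrywise {B B' : Type} [Finite B'] (g : R2 → R2)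
    (f : (B →₀ R2) →ₗ[R2] (B' →₀ R2)) : (B →₀ R2) →ₗ[R2] (B' →₀ R2) :=
  bmap fun x => Finsupp.equivFunOnFinite.symm fun y => g (matOf f x y)

/-- `Φ_B`, the formal derivative of the differential with respect to `U`. -/
def PhiB {B : Type} [Finite B] (d : (B →₀ R2) →ₗ[R2] (B →₀ R2)) :
    (B →₀ R2) →ₗ[R2] (B →₀ R2) :=
  entrywise dU d

/-- `Ψ_B`, the formal derivative of the differential with respect to `V`. -/
def PsiB {B : Type} [Finite B] (d : (B →₀ R2) →ₗ[R2] (B →₀ R2)) :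
    (B →₀ R2) →ₗ[R2] (B →₀ R2) :=
  entrywise dV d

/-! Differentiating the matrix identity `∂₂ F = F ∂₁` entrywise with the Leibniz rule gives
`Φ₂ F + ∂₂ F' = F' ∂₁ + F Φ₁`; in characteristic two this is the claimed identity. -/

lemma two_eq_zero : (2 : R2) = 0 := by
  rw [← map_ofNat (algebraMap F2 R2) 2, show (2 : F2) = 0 from rfl, map_zero]

lemma add_eq_add_swap_of_add_eq_add {M : Type*} [AddCommGroup M] [Module R2 M] {a b c d : M}
    (h : a + b = c + d) : a + d = b + c := by
  have add_self (x : M) : x + x = 0 := by rw [← two_smul R2 x, two_eq_zero, zero_smul]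
  calc a + d = a + (b + b) + d := by rw [add_self, add_zero]
    _ = (a + b) + (b + d) := by abel
    _ = b + c + (d + d) := by rw [h]; abel
    _ = b + c := by rw [add_self, add_zero]

section FormalDerivative

lemma dU_zero : dU 0 = 0 := by simp [dU]

lemma dU_add (a b : R2) : dU (a + b) = dU a + dU b := by
  unfold dU
  rw [AddMonoidAlgebra.coeff_add, Finsupp.sum_add_index (fun _ _ => by simp)
    (fun _ _ _ _ => by rw [mul_add, AddMonoidAlgebra.single_add])]

lemma dU_single (mn : ℤ × ℤ) (c : F2) :
    dU (AddMonoidAlgebra.single mn c) = AddMonoidAlgebra.single (mn.1 - 1, mn.2) (mn.1 * c) := by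
  unfold dU
  rw [AddMonoidAlgebra.coeff_single, Finsupp.sum_single_index (by simp)]

lemma dU_single_mul_single (m n : ℤ × ℤ) (c d : F2) :
    dU (AddMonoidAlgebra.single m c * AddMonoidAlgebra.single n d) =
      dU (AddMonoidAlgebra.single m c) * AddMonoidAlgebra.single n d +
        AddMonoidAlgebra.single m c * dU (AddMonoidAlgebra.single n d) := by
  simp only [AddMonoidAlgebra.single_mul_single, dU_single]
  have hleft : ((m.1 - 1, m.2) : ℤ × ℤ) + n = ((m + n).1 - 1, (m + n).2) :=
    Prod.ext (by simp only [Prod.fst_add]; ring) rfl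
  have hright : m + ((n.1 - 1, n.2) : ℤ × ℤ) = ((m + n).1 - 1, (m + n).2) :=
    Prod.ext (by simp only [Prod.fst_add]; ring) rfl
  rw [hleft, hright, ← AddMonoidAlgebra.single_add]
  congr 1
  rw [Prod.fst_add]
  push_cast
  ring

lemma dU_mul (a b : R2) : dU (a * b) = dU a * b + a * dU b := by
  induction a using AddMonoidAlgebra.induction_linear with
  | zero => simp [dU_zero]
  | add f g hf hg => rw [add_mul, dU_add, hf, hg, dU_add]; ring
  | single m c =>
    induction b using AddMonoidAlgebra.induction_linear with
    | zero => simp [dU_zero]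
    | add f g hf hg => rw [mul_add, dU_add, hf, hg, dU_add]; ring
    | single n d => exact dU_single_mul_single m n c d

def dUDerivation : Derivation ℤ R2 R2 :=
  Derivation.mk' (AddMonoidHom.mk' dU dU_add).toIntLinearMap fun a b => by
    simp only [AddMonoidHom.coe_toIntLinearMap, AddMonoidHom.mk'_apply, smul_eq_mul, dU_mul]
    ring

lemma coe_dUDerivation : ⇑dUDerivation = dU := rfl

end FormalDerivative

section Matrices

variable {B₁ B₂ B₃ : Type}

lemma matOf_add (f g : (B₁ →₀ R2) →ₗ[R2] (B₂ →₀ R2)) (x : B₁) (y : B₂) :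
    matOf (f + g) x y = matOf f x y + matOf g x y := rfl

lemma matOf_entrywise [Finite B₂] (g : R2 → R2) (f : (B₁ →₀ R2) →ₗ[R2] (B₂ →₀ R2))
    (x : B₁) (y : B₂) : matOf (entrywise g f) x y = g (matOf f x y) := by
  simp [matOf, entrywise, bmap]

lemma linearMap_ext_matOf {f g : (B₁ →₀ R2) →ₗ[R2] (B₂ →₀ R2)}
    (h : ∀ x y, matOf f x y = matOf g x y) : f = g :=
  Finsupp.lhom_ext' fun x => LinearMap.ext_ring <| Finsupp.ext (h x)

lemma apply_eq_sum_matOf [Fintype B₁] (f : (B₁ →₀ R2) →ₗ[R2] (B₂ →₀ R2)) (w : B₁ →₀ R2)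
    (y : B₂) : f w y = ∑ x, w x * matOf f x y := by
  conv_lhs => rw [← Finsupp.univ_sum_single w]
  simp only [map_sum, Finsupp.finsetSum_apply, matOf]
  refine Finset.sum_congr rfl fun x _ => ?_
  rw [← smul_eq_mul, ← Finsupp.smul_apply, ← map_smul, Finsupp.smul_single, smul_eq_mul, mul_one]

lemma matOf_comp [Fintype B₂] (f : (B₁ →₀ R2) →ₗ[R2] (B₂ →₀ R2))
    (g : (B₂ →₀ R2) →ₗ[R2] (B₃ →₀ R2)) (x : B₁) (z : B₃) :
    matOf (g ∘ₗ f) x z = ∑ y, matOf f x y * matOf g y z :=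
  apply_eq_sum_matOf g _ z

lemma entrywise_derivation_comp [Fintype B₂] [Fintype B₃] (D : Derivation ℤ R2 R2)
    (f : (B₁ →₀ R2) →ₗ[R2] (B₂ →₀ R2)) (g : (B₂ →₀ R2) →ₗ[R2] (B₃ →₀ R2)) :
    entrywise D (g ∘ₗ f) = entrywise D g ∘ₗ f + g ∘ₗ entrywise D f := by
  refine linearMap_ext_matOf fun x z => ?_
  simp only [matOf_entrywise, matOf_add, matOf_comp, map_sum, Derivation.leibniz, smul_eq_mul,
    ← Finset.sum_add_distrib]
  exact Finset.sum_congr rfl fun y _ => by ring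

end Matrices

theorem stmt4_general {B₁ B₂ : Type} [Fintype B₁] [Fintype B₂]
    (d₁ : (B₁ →₀ R2) →ₗ[R2] (B₁ →₀ R2)) (d₂ : (B₂ →₀ R2) →ₗ[R2] (B₂ →₀ R2))
    (F : (B₁ →₀ R2) →ₗ[R2] (B₂ →₀ R2)) (hF : d₂ ∘ₗ F = F ∘ₗ d₁) :
    PhiB d₂ ∘ₗ F + F ∘ₗ PhiB d₁ = d₂ ∘ₗ entrywise dU F + entrywise dU F ∘ₗ d₁ := by
  have leibniz := congrArg (entrywise dUDerivation) hF
  rw [entrywise_derivation_comp, entrywise_derivation_comp, coe_dUDerivation] at leibniz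
  exact add_eq_add_swap_of_add_eq_add (M := (B₁ →₀ R2) →ₗ[R2] (B₂ →₀ R2)) leibniz

/-- for an `R`-equivariant chain map `F : C₁ → C₂` between
finitely generated free chain complexes with bases, one has
`Φ_{B₂} ∘ F + F ∘ Φ_{B₁} = ∂₂ ∘ F' + F' ∘ ∂₁`, where `F'` is the map whose
matrix is the formal `U`-derivative of the matrix of `F`; in particular `F`
commutes with the maps `Φ` up to `R`-equivariant chain homotopy. -/
theorem stmt4 {B₁ B₂ : Type} [Fintype B₁] [Fintype B₂]
    (d₁ : (B₁ →₀ R2) →ₗ[R2] (B₁ →₀ R2)) (d₂ : (B₂ →₀ R2) →ₗ[R2] (B₂ →₀ R2))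
    (hd₁ : d₁ ∘ₗ d₁ = 0) (hd₂ : d₂ ∘ₗ d₂ = 0)
    (F : (B₁ →₀ R2) →ₗ[R2] (B₂ →₀ R2)) (hF : d₂ ∘ₗ F = F ∘ₗ d₁) :
    PhiB d₂ ∘ₗ F + F ∘ₗ PhiB d₁ = d₂ ∘ₗ entrywise dU F + entrywise dU F ∘ₗ d₁ :=
  stmt4_general d₁ d₂ F hF
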